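/- arXiv:2507.07951 — 3 statements merged into one kernel-verified Lean document; each statement's English description precedes it below -/
import Mathlib

section
/- Consistency of line crossings: for three distinct non-concurrent, pairwise intersecting lines r, i, j in the plane, each given an orientation (direction), the cyclic data of which intersection comes first on each of the three lines takes exactly one of a bounded set of combinatorial types; in particular, if on line r (traversed in its direction) the intersection with i precedes the intersection with j, then the order of the other two intersections on lines i and j is determined up to the orientation choices, yielding exactly 12 possible combined configurations (6 orderings × 2 orientations of the triangle). -/
open Real

/-- Intersection point of the lines `x·cos a₁ + y·sin a₁ + C₁ = 0` and
`x·cos a₂ + y·sin a₂ + C₂ = 0` (for non-parallel lines). -/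
noncomputable def interPt (a₁ C₁ a₂ C₂ : ℝ) : ℝ × ℝ :=
  ((C₂ * Real.sin a₁ - C₁ * Real.sin a₂) / Real.sin (a₂ - a₁),
   (C₁ * Real.cos a₂ - C₂ * Real.cos a₁) / Real.sin (a₂ - a₁))

/-- Direction vector of the directed line with normal angle `a ∈ (−π, 0)`,
following the convention of the paper (line 1 is topmost, directed right to
left, and lines are numbered clockwise). -/
noncomputable def dirVec (a : ℝ) : ℝ × ℝ := (Real.sin a, -Real.cos a)

/-- On the directed line `k`, the crossing with line `u` precedes the crossing
with line `w`. -/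
noncomputable def crossesBefore (a C : Fin 3 → ℝ) (k u w : Fin 3) : Prop :=
  (interPt (a k) (C k) (a u) (C u)).1 * (dirVec (a k)).1 +
    (interPt (a k) (C k) (a u) (C u)).2 * (dirVec (a k)).2 <
  (interPt (a k) (C k) (a w) (C w)).1 * (dirVec (a k)).1 +
    (interPt (a k) (C k) (a w) (C w)).2 * (dirVec (a k)).2

lemma proj (x Cx y Cy : ℝ) (h : Real.sin (y - x) ≠ 0) :
    (interPt x Cx y Cy).1 * (dirVec x).1 + (interPt x Cx y Cy).2 * (dirVec x).2
      = (Cy - Cx * Real.cos (y - x)) / Real.sin (y - x) := by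
  unfold interPt dirVec
  rw [Real.cos_sub]
  field_simp
  linear_combination Cy * Real.sin_sq_add_cos_sq x

lemma div_pos_iff_mul_pos (p q : ℝ) : 0 < p / q ↔ 0 < p * q := by
  rw [div_eq_mul_inv, mul_pos_iff, mul_pos_iff, inv_pos, inv_lt_zero]

lemma cross_iff (a C : Fin 3 → ℝ) (k u w : Fin 3)
    (h1 : Real.sin (a u - a k) ≠ 0) (h2 : Real.sin (a w - a k) ≠ 0) :
    crossesBefore a C k u w ↔
      0 < (C k * Real.sin (a w - a u) + C u * Real.sin (a k - a w) +
            C w * Real.sin (a u - a k)) *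
          (Real.sin (a u - a k) * Real.sin (a w - a k)) := by
  unfold crossesBefore
  rw [proj _ _ _ _ h1, proj _ _ _ _ h2, ← sub_pos]
  have e1 : Real.sin (a w - a u)
      = Real.sin (a w - a k) * Real.cos (a u - a k)
        - Real.cos (a w - a k) * Real.sin (a u - a k) := by
    rw [show a w - a u = (a w - a k) - (a u - a k) by ring]; exact Real.sin_sub _ _
  have e2 : Real.sin (a k - a w) = -Real.sin (a w - a k) := by
    rw [show a k - a w = -(a w - a k) by ring]; exact Real.sin_neg _
  have key : (C w - C k * Real.cos (a w - a k)) / Real.sin (a w - a k)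
      - (C u - C k * Real.cos (a u - a k)) / Real.sin (a u - a k)
      = (C k * Real.sin (a w - a u) + C u * Real.sin (a k - a w) +
          C w * Real.sin (a u - a k)) /
        (Real.sin (a u - a k) * Real.sin (a w - a k)) := by
    rw [e1, e2]; field_simp; ring
  rw [key, div_pos_iff_mul_pos]

def pat3 (k u w : Fin 3) (d : Bool) (m : Fin 3) : Bool :=
  let t : Fin 3 × Fin 3 × Fin 3 := if m = 0 then (k,u,w) else if m = 1 then (u,k,w) else (w,k,u)
  ((d == decide (t.2.1 = t.1 + 1)) ^^ decide (t.2.1 < t.1)) ^^ decide (t.2.2 < t.1)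

set_option maxHeartbeats 1000000 in
lemma main_det (a C : Fin 3 → ℝ)
    (ha2 : -π < a 2) (ha21 : a 2 < a 1) (ha10 : a 1 < a 0) (ha0 : a 0 < 0)
    (k u w : Fin 3) (hku : k ≠ u) (hkw : k ≠ w) (huw : u ≠ w)
    (b : Fin 3 → Bool) (d : Bool)
    (hd : cond d
      (0 < C 0 * Real.sin (a 2 - a 1) + C 1 * Real.sin (a 0 - a 2) + C 2 * Real.sin (a 1 - a 0))
      (C 0 * Real.sin (a 2 - a 1) + C 1 * Real.sin (a 0 - a 2) + C 2 * Real.sin (a 1 - a 0) < 0))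
    (e0 : b 0 = true ↔ crossesBefore a C k u w)
    (e1 : b 1 = true ↔ crossesBefore a C u k w)
    (e2 : b 2 = true ↔ crossesBefore a C w k u) :
    b = pat3 k u w d := by
  have pi_pos := Real.pi_pos
  have s01 : 0 < Real.sin (a 0 - a 1) :=
    Real.sin_pos_of_pos_of_lt_pi (by linarith) (by linarith)
  have s02 : 0 < Real.sin (a 0 - a 2) :=
    Real.sin_pos_of_pos_of_lt_pi (by linarith) (by linarith)
  have s12 : 0 < Real.sin (a 1 - a 2) :=
    Real.sin_pos_of_pos_of_lt_pi (by linarith) (by linarith)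
  have f10 : Real.sin (a 1 - a 0) = -Real.sin (a 0 - a 1) := by
    rw [show a 1 - a 0 = -(a 0 - a 1) by ring, Real.sin_neg]
  have f20 : Real.sin (a 2 - a 0) = -Real.sin (a 0 - a 2) := by
    rw [show a 2 - a 0 = -(a 0 - a 2) by ring, Real.sin_neg]
  have f21 : Real.sin (a 2 - a 1) = -Real.sin (a 1 - a 2) := by
    rw [show a 2 - a 1 = -(a 1 - a 2) by ring, Real.sin_neg]
  have hne : ∀ p q : Fin 3, p ≠ q → Real.sin (a p - a q) ≠ 0 := by
    have tri : ∀ p q : Fin 3, p ≠ q →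
        (p = 0 ∧ q = 1) ∨ (p = 0 ∧ q = 2) ∨ (p = 1 ∧ q = 0) ∨ (p = 1 ∧ q = 2) ∨
        (p = 2 ∧ q = 0) ∨ (p = 2 ∧ q = 1) := by decide
    intro p q hpq
    rcases tri p q hpq with ⟨rfl, rfl⟩|⟨rfl, rfl⟩|⟨rfl, rfl⟩|⟨rfl, rfl⟩|⟨rfl, rfl⟩|⟨rfl, rfl⟩
    · exact ne_of_gt s01
    · exact ne_of_gt s02
    · rw [f10]; exact neg_ne_zero.mpr (ne_of_gt s01)
    · exact ne_of_gt s12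
    · rw [f20]; exact neg_ne_zero.mpr (ne_of_gt s02)
    · rw [f21]; exact neg_ne_zero.mpr (ne_of_gt s12)
  rw [cross_iff a C _ _ _ (hne u k hku.symm) (hne w k hkw.symm)] at e0
  rw [cross_iff a C _ _ _ (hne k u hku) (hne w u huw.symm)] at e1
  rw [cross_iff a C _ _ _ (hne k w hkw) (hne u w huw)] at e2
  have tri3 : ∀ k u w : Fin 3, k ≠ u → k ≠ w → u ≠ w →
      (k = 0 ∧ u = 1 ∧ w = 2) ∨ (k = 0 ∧ u = 2 ∧ w = 1) ∨ (k = 1 ∧ u = 0 ∧ w = 2) ∨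
      (k = 1 ∧ u = 2 ∧ w = 0) ∨ (k = 2 ∧ u = 0 ∧ w = 1) ∨ (k = 2 ∧ u = 1 ∧ w = 0) := by
    decide
  rcases tri3 k u w hku hkw huw with ⟨rfl, rfl, rfl⟩|⟨rfl, rfl, rfl⟩|⟨rfl, rfl, rfl⟩|⟨rfl, rfl, rfl⟩|⟨rfl, rfl, rfl⟩|⟨rfl, rfl, rfl⟩ <;>
  cases d <;>
  simp only [Bool.cond_false, Bool.cond_true] at hd <;>
  simp only [f10, f20, f21] at e0 e1 e2 hd <;>
  (try (replace hd := neg_pos.2 hd)) <;>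
  (have hA := mul_pos hd (mul_pos s01 s02)
   have hB := mul_pos hd (mul_pos s01 s12)
   have hC := mul_pos hd (mul_pos s02 s12)
   funext m
   fin_cases m <;>
   first
     | exact e0.mpr (by linarith only [hA, hB, hC])
     | exact Bool.eq_false_iff.mpr (fun hcon => by linarith only [e0.mp hcon, hA, hB, hC])
     | exact e1.mpr (by linarith only [hA, hB, hC])
     | exact Bool.eq_false_iff.mpr (fun hcon => by linarith only [e1.mp hcon, hA, hB, hC])
     | exact e2.mpr (by linarith only [hA, hB, hC])
     | exact Bool.eq_false_iff.mpr (fun hcon => by linarith only [e2.mp hcon, hA, hB, hC]))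

set_option maxHeartbeats 1000000 in
/-- Consistency of crossings: for three distinct pairwise intersecting,
non-concurrent directed lines (directions induced by the numbering convention),
the combinatorial type — which role assignment `σ` (assigning the roles
`r, i, j` to the three lines, 6 possibilities) together with which crossing
comes first on each of the three lines (3 binary orders) — can take exactly 12
values: the three binary choices are not independent, and for each of the 6
orderings exactly 2 triples of orders are geometrically achievable. -/
theorem stmt_8 :
    {x : Equiv.Perm (Fin 3) × (Fin 3 → Bool) | ∃ a C : Fin 3 → ℝ,
      (-Real.pi < a 2 ∧ a 2 < a 1 ∧ a 1 < a 0 ∧ a 0 < 0) ∧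
      (C 0 * Real.sin (a 2 - a 1) + C 1 * Real.sin (a 0 - a 2) +
        C 2 * Real.sin (a 1 - a 0) ≠ 0) ∧
      (x.2 0 = true ↔ crossesBefore a C (x.1 0) (x.1 1) (x.1 2)) ∧
      (x.2 1 = true ↔ crossesBefore a C (x.1 1) (x.1 0) (x.1 2)) ∧
      (x.2 2 = true ↔ crossesBefore a C (x.1 2) (x.1 0) (x.1 1))}.ncard = 12 := by
  classical
  have hset : {x : Equiv.Perm (Fin 3) × (Fin 3 → Bool) | ∃ a C : Fin 3 → ℝ,
      (-Real.pi < a 2 ∧ a 2 < a 1 ∧ a 1 < a 0 ∧ a 0 < 0) ∧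
      (C 0 * Real.sin (a 2 - a 1) + C 1 * Real.sin (a 0 - a 2) +
        C 2 * Real.sin (a 1 - a 0) ≠ 0) ∧
      (x.2 0 = true ↔ crossesBefore a C (x.1 0) (x.1 1) (x.1 2)) ∧
      (x.2 1 = true ↔ crossesBefore a C (x.1 1) (x.1 0) (x.1 2)) ∧
      (x.2 2 = true ↔ crossesBefore a C (x.1 2) (x.1 0) (x.1 1))}
      = ↑(Finset.univ.image (fun p : Equiv.Perm (Fin 3) × Bool =>
          (p.1, pat3 (p.1 0) (p.1 1) (p.1 2) p.2))) := by
    ext x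
    obtain ⟨σ, b⟩ := x
    simp only [Set.mem_setOf_eq, Finset.coe_image, Set.mem_image, Finset.mem_coe,
      Finset.mem_univ, true_and]
    constructor
    · rintro ⟨a, C, ⟨h1, h2, h3, h4⟩, hD, e0, e1, e2⟩
      have hne01 : σ 0 ≠ σ 1 := σ.injective.ne (by decide)
      have hne02 : σ 0 ≠ σ 2 := σ.injective.ne (by decide)
      have hne12 : σ 1 ≠ σ 2 := σ.injective.ne (by decide)
      rcases hD.lt_or_gt with hneg | hpos
      · exact ⟨(σ, false), by
          rw [main_det a C h1 h2 h3 h4 (σ 0) (σ 1) (σ 2) hne01 hne02 hne12 b false hneg e0 e1 e2]⟩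
      · exact ⟨(σ, true), by
          rw [main_det a C h1 h2 h3 h4 (σ 0) (σ 1) (σ 2) hne01 hne02 hne12 b true hpos e0 e1 e2]⟩
    · rintro ⟨⟨σ', d⟩, hEq⟩
      injection hEq with hEq1 hEq2
      subst hEq1; subst hEq2
      set aW : Fin 3 → ℝ := ![-(π/4), -(π/2), -(3*π/4)] with haW
      set CW : Fin 3 → ℝ := ![0, cond d 1 (-1), 0] with hCW
      have hv0 : aW 0 = -(π/4) := rfl
      have hv1 : aW 1 = -(π/2) := rfl
      have hv2 : aW 2 = -(3*π/4) := rfl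
      have hc0 : CW 0 = 0 := rfl
      have hc1 : CW 1 = cond d 1 (-1) := rfl
      have hc2 : CW 2 = 0 := rfl
      have pi_pos := Real.pi_pos
      have o1 : -Real.pi < aW 2 := by rw [hv2]; linarith
      have o2 : aW 2 < aW 1 := by rw [hv1, hv2]; linarith
      have o3 : aW 1 < aW 0 := by rw [hv0, hv1]; linarith
      have o4 : aW 0 < 0 := by rw [hv0]; linarith
      have hDval : CW 0 * Real.sin (aW 2 - aW 1) + CW 1 * Real.sin (aW 0 - aW 2) +
          CW 2 * Real.sin (aW 1 - aW 0) = cond d 1 (-1) := by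
        rw [hc0, hc1, hc2, show aW 0 - aW 2 = π/2 by rw [hv0, hv2]; ring,
          Real.sin_pi_div_two]
        ring
      have hDne : CW 0 * Real.sin (aW 2 - aW 1) + CW 1 * Real.sin (aW 0 - aW 2) +
          CW 2 * Real.sin (aW 1 - aW 0) ≠ 0 := by
        rw [hDval]; cases d <;> norm_num
      have hd : cond d
          (0 < CW 0 * Real.sin (aW 2 - aW 1) + CW 1 * Real.sin (aW 0 - aW 2) +
            CW 2 * Real.sin (aW 1 - aW 0))
          (CW 0 * Real.sin (aW 2 - aW 1) + CW 1 * Real.sin (aW 0 - aW 2) +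
            CW 2 * Real.sin (aW 1 - aW 0) < 0) := by
        cases d <;> rw [hDval] <;> norm_num
      have hne01 : σ' 0 ≠ σ' 1 := σ'.injective.ne (by decide)
      have hne02 : σ' 0 ≠ σ' 2 := σ'.injective.ne (by decide)
      have hne12 : σ' 1 ≠ σ' 2 := σ'.injective.ne (by decide)
      set P0 := crossesBefore aW CW (σ' 0) (σ' 1) (σ' 2) with hP0
      set P1 := crossesBefore aW CW (σ' 1) (σ' 0) (σ' 2) with hP1
      set P2 := crossesBefore aW CW (σ' 2) (σ' 0) (σ' 1) with hP2
      set babs : Fin 3 → Bool := fun m =>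
        if m = 0 then (if P0 then true else false)
        else if m = 1 then (if P1 then true else false)
        else (if P2 then true else false) with hbabs
      have hb0 : babs 0 = true ↔ P0 := by
        rw [hbabs]; by_cases h : P0 <;> simp [h]
      have hb1 : babs 1 = true ↔ P1 := by
        rw [hbabs]; by_cases h : P1 <;> simp [h]
      have hb2 : babs 2 = true ↔ P2 := by
        rw [hbabs]; by_cases h : P2 <;> simp [h]
      have hmain := main_det aW CW o1 o2 o3 o4 (σ' 0) (σ' 1) (σ' 2) hne01 hne02 hne12
        babs d hd hb0 hb1 hb2
      exact ⟨aW, CW, ⟨o1, o2, o3, o4⟩, hDne,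
        by rw [← hmain]; exact hb0, by rw [← hmain]; exact hb1, by rw [← hmain]; exact hb2⟩
  rw [hset, Set.ncard_coe_finset]
  decide
end

section
/- Three directed lines given in the parametric forms L_k(t) = p_k + t·v_k (pairwise non-parallel, non-concurrent): if on line r the parameter of the intersection with line i is less than the parameter of the intersection with line j, then the signs of certain 2×2 determinants of the direction vectors determine the relative order of intersections on lines i and j. -/
/-- The 2×2 determinant of two plane vectors. -/
def det2 (u v : ℝ × ℝ) : ℝ := u.1 * v.2 - u.2 * v.1

private lemma aux_sign {a b X D : ℝ} (ha : a < 0) (hD : D ≠ 0)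
    (key : b * D = a * X) : b < 0 ↔ 0 < X * D := by
  have hDD : 0 < D * D := mul_self_pos.mpr hD
  have keyD : b * (D * D) = a * (X * D) := by linear_combination D * key
  constructor
  · intro hb
    have h1 : a * (X * D) < 0 := keyD ▸ mul_neg_of_neg_of_pos hb hDD
    rcases mul_neg_iff.mp h1 with ⟨h, _⟩ | ⟨_, h⟩
    · linarith
    · exact h
  · intro hX
    have h1 : b * (D * D) < 0 := by
      rw [keyD]; exact mul_neg_of_neg_of_pos ha hX
    rcases mul_neg_iff.mp h1 with ⟨_, h⟩ | ⟨h, _⟩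
    · linarith
    · exact h

/-- Consistency of crossing orders for three directed lines `L_k(t) = p_k + t·v_k`
(`k = 0` plays the role of `r`, `k = 1` of `i`, `k = 2` of `j`), pairwise
non-parallel and non-concurrent. If on line `r` the intersection with `i` comes
before the intersection with `j` (in parameter order), then the relative orders of
the intersections on lines `i` and `j` are determined by the signs of 2×2
determinants of the direction vectors. -/
theorem stmt_9 (p v : Fin 3 → ℝ × ℝ) (t : Fin 3 → Fin 3 → ℝ)
    (hind : ∀ u w : Fin 3, u ≠ w → det2 (v u) (v w) ≠ 0)
    (ht : ∀ u w : Fin 3, u ≠ w → p u + t u w • v u = p w + t w u • v w)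
    (hnc : ¬∃ q : ℝ × ℝ, (∃ s : ℝ, q = p 0 + s • v 0) ∧
        (∃ s : ℝ, q = p 1 + s • v 1) ∧ (∃ s : ℝ, q = p 2 + s • v 2))
    (h01 : t 0 1 < t 0 2) :
    (t 1 0 < t 1 2 ↔ 0 < det2 (v 0) (v 2) * det2 (v 1) (v 2)) ∧
    (t 2 1 < t 2 0 ↔ 0 < det2 (v 0) (v 1) * det2 (v 2) (v 1)) := by
  have e1 := ht 0 1 (by decide)
  have e2 := ht 0 2 (by decide)
  have e3 := ht 1 2 (by decide)
  rw [Prod.ext_iff] at e1 e2 e3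
  simp only [Prod.fst_add, Prod.snd_add, Prod.smul_fst, Prod.smul_snd,
    smul_eq_mul] at e1 e2 e3
  obtain ⟨e1a, e1b⟩ := e1
  obtain ⟨e2a, e2b⟩ := e2
  obtain ⟨e3a, e3b⟩ := e3
  have hD12 := hind 1 2 (by decide)
  have hD21 := hind 2 1 (by decide)
  simp only [det2] at hD12 hD21 ⊢
  have ha : t 0 1 - t 0 2 < 0 := by linarith
  have key1 : (t 1 0 - t 1 2) * ((v 1).1 * (v 2).2 - (v 1).2 * (v 2).1)
      = (t 0 1 - t 0 2) * ((v 0).1 * (v 2).2 - (v 0).2 * (v 2).1) := by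
    linear_combination (v 2).1 * (e1b - e2b + e3b) - (v 2).2 * (e1a - e2a + e3a)
  have key2 : (t 2 1 - t 2 0) * ((v 2).1 * (v 1).2 - (v 2).2 * (v 1).1)
      = (t 0 1 - t 0 2) * ((v 0).1 * (v 1).2 - (v 0).2 * (v 1).1) := by
    linear_combination (v 1).1 * (e1b - e2b + e3b) - (v 1).2 * (e1a - e2a + e3a)
  constructor
  · have := aux_sign ha hD12 key1
    rw [sub_neg] at this
    rw [this]
  · have := aux_sign ha hD21 key2
    rw [sub_neg] at this
    rw [this]
end

section
/- In an arrangement table of n pairwise intersecting pseudolines with only simple crossings, if r < i < j and in row r line i appears before line j, then in row i line r appears before line j, and in row j line r appears before line i (one case of the consistency property). -/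
open Real

/-- On the directed line `k`, the crossing with line `u` precedes the crossing
with line `w`; equivalently, `u` appears before `w` in row `k` of the table. -/
noncomputable def rowBefore {n : ℕ} (a C : Fin n → ℝ) (k u w : Fin n) : Prop :=
  (interPt (a k) (C k) (a u) (C u)).1 * (dirVec (a k)).1 +
    (interPt (a k) (C k) (a u) (C u)).2 * (dirVec (a k)).2 <
  (interPt (a k) (C k) (a w) (C w)).1 * (dirVec (a k)).1 +
    (interPt (a k) (C k) (a w) (C w)).2 * (dirVec (a k)).2

/-!
Along line `k`, the crossing with line `u` sits at parameter
`(C u - C k cos (a u - a k)) / sin (a u - a k)`. For `r < i < j` the three angle differences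
`a r - a i`, `a i - a j`, `a r - a j` lie in `(0, π)`, so their sines are positive and each of the
three comparisons `i <_r j`, `r <_i j`, `r <_j i` clears denominators to the same inequality
`C j sin (a r - a i) - C i sin (a r - a j) + C r sin (a i - a j) < 0`. The left side is the
determinant of the coefficient rows `(cos a, sin a, C)` of the three lines, so its sign is the
orientation of the triangle they cut out, which all three rows of the table read off.
-/

noncomputable def crossingParam {n : ℕ} (a C : Fin n → ℝ) (k u : Fin n) : ℝ :=
  (C u - C k * cos (a u - a k)) / sin (a u - a k)

noncomputable def triangleDet {n : ℕ} (a C : Fin n → ℝ) (r i j : Fin n) : ℝ :=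
  C j * sin (a r - a i) - C i * sin (a r - a j) + C r * sin (a i - a j)

lemma interPt_dot_dirVec (ak Ck au Cu : ℝ) :
    (interPt ak Ck au Cu).1 * (dirVec ak).1 + (interPt ak Ck au Cu).2 * (dirVec ak).2
      = (Cu - Ck * cos (au - ak)) / sin (au - ak) := by
  unfold interPt dirVec
  simp only [div_mul_eq_mul_div, ← add_div]
  congr 1
  rw [cos_sub]
  linear_combination Cu * sin_sq_add_cos_sq ak

lemma rowBefore_iff {n : ℕ} (a C : Fin n → ℝ) (k u w : Fin n) :
    rowBefore a C k u w ↔ crossingParam a C k u < crossingParam a C k w := by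
  simp only [rowBefore, crossingParam, interPt_dot_dirVec]

lemma sin_sub_pos_of_neg_pi_lt {α β : ℝ} (hα : α < 0) (hβ : -π < β) (hβα : β < α) :
    0 < sin (α - β) :=
  sin_pos_of_pos_of_lt_pi (sub_pos.mpr hβα) (by linarith)

section Orientation

variable {n : ℕ} (a C : Fin n → ℝ) (r i j : Fin n)

lemma rowBefore_first_iff (hri : 0 < sin (a r - a i)) (hrj : 0 < sin (a r - a j)) :
    rowBefore a C r i j ↔ triangleDet a C r i j < 0 := by
  have hij : sin (a i - a j) = sin (a r - a j) * cos (a r - a i)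
      - cos (a r - a j) * sin (a r - a i) := by
    rw [← sin_sub]; congr 1; ring
  rw [rowBefore_iff, crossingParam, crossingParam, triangleDet, hij,
    show a i - a r = -(a r - a i) by ring, show a j - a r = -(a r - a j) by ring,
    sin_neg, cos_neg, sin_neg, cos_neg, div_neg, div_neg, neg_lt_neg_iff,
    div_lt_div_iff₀ hrj hri]
  constructor <;> intro h <;> linarith

lemma rowBefore_middle_iff (hri : 0 < sin (a r - a i)) (hij : 0 < sin (a i - a j)) :
    rowBefore a C i r j ↔ triangleDet a C r i j < 0 := by
  have hrj : sin (a r - a j) = sin (a r - a i) * cos (a i - a j)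
      + cos (a r - a i) * sin (a i - a j) := by
    rw [← sin_add]; congr 1; ring
  rw [rowBefore_iff, crossingParam, crossingParam, triangleDet, hrj,
    show a j - a i = -(a i - a j) by ring, sin_neg, cos_neg, div_neg, lt_neg, ← neg_div,
    div_lt_div_iff₀ hij hri]
  constructor <;> intro h <;> linarith

lemma rowBefore_last_iff (hij : 0 < sin (a i - a j)) (hrj : 0 < sin (a r - a j)) :
    rowBefore a C j r i ↔ triangleDet a C r i j < 0 := by
  have hri : sin (a r - a i) = sin (a r - a j) * cos (a i - a j)
      - cos (a r - a j) * sin (a i - a j) := by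
    rw [← sin_sub]; congr 1; ring
  rw [rowBefore_iff, crossingParam, crossingParam, triangleDet, hri,
    div_lt_div_iff₀ hrj hij]
  constructor <;> intro h <;> linarith

end Orientation

theorem stmt_13_general (n : ℕ) (a C : Fin n → ℝ)
    (hrange : ∀ k, -Real.pi < a k ∧ a k < 0)
    (hanti : StrictAnti a)
    (r i j : Fin n) (hri : r < i) (hij : i < j)
    (h : rowBefore a C r i j) :
    rowBefore a C i r j ∧ rowBefore a C j r i := by
  have sin_ri := sin_sub_pos_of_neg_pi_lt (hrange r).2 (hrange i).1 (hanti hri)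
  have sin_ij := sin_sub_pos_of_neg_pi_lt (hrange i).2 (hrange j).1 (hanti hij)
  have sin_rj := sin_sub_pos_of_neg_pi_lt (hrange r).2 (hrange j).1 (hanti (hri.trans hij))
  have hdet := (rowBefore_first_iff a C r i j sin_ri sin_rj).1 h
  exact ⟨(rowBefore_middle_iff a C r i j sin_ri sin_ij).2 hdet,
    (rowBefore_last_iff a C r i j sin_ij sin_rj).2 hdet⟩

/-- Consistency property, case `r < i < j`: in an arrangement of `n` directed
straight lines in general position (normal forms `x·cos aₖ + y·sin aₖ + Cₖ = 0`
with angles decreasing in `(−π, 0)`, encoding the clockwise circle-numbering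
convention; pairwise intersecting since the angles are distinct; no three
concurrent), if line `i` appears before line `j` in row `r` of the table, then
`r` appears before `j` in row `i`, and `r` appears before `i` in row `j`. -/
theorem stmt_13 (n : ℕ) (a C : Fin n → ℝ)
    (hrange : ∀ k, -Real.pi < a k ∧ a k < 0)
    (hanti : StrictAnti a)
    (hgen : ∀ r i j : Fin n, r ≠ i → r ≠ j → i ≠ j →
      ¬∃ p : ℝ × ℝ,
        (p.1 * Real.cos (a r) + p.2 * Real.sin (a r) + C r = 0) ∧
        (p.1 * Real.cos (a i) + p.2 * Real.sin (a i) + C i = 0) ∧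
        (p.1 * Real.cos (a j) + p.2 * Real.sin (a j) + C j = 0))
    (r i j : Fin n) (hri : r < i) (hij : i < j)
    (h : rowBefore a C r i j) :
    rowBefore a C i r j ∧ rowBefore a C j r i :=
  stmt_13_general n a C hrange hanti r i j hri hij h
end
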